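/- Let d ≥ 2 be an integer, 1 < α < 2, 0 < γ ≤ 2, and let β ∈ (αγ/2, d+γ]. There exists a constant C > 0, depending only on d, α, γ, β, such that for every nonnegative f ∈ C_c(ℝ^{d+1}) and every (t,x) ∈ ℝ × ℝ^d, P_γ f(t,x) ≤ C (M_β f(t,x))^{(αγ/2)·(1/β)} (M f(t,x))^{1 − (αγ/2)·(1/β)}, where both sides are interpreted in [0,∞]. -/

import Mathlib

open MeasureTheory ENNReal Set Filter

noncomputable section

/-- The spatial space `ℝ^d`. -/
abbrev Spc (d : ℕ) := EuclideanSpace ℝ (Fin d)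

/-- Parabolic cylinder `C_ρ(t,x) = {(s,y) : t ≤ s ≤ t + ρ^α, |y - x| ≤ ρ}`. -/
def cylP (d : ℕ) (α ρ t : ℝ) (x : Spc d) : Set (ℝ × Spc d) :=
  {p | t ≤ p.1 ∧ p.1 ≤ t + ρ ^ α ∧ dist p.2 x ≤ ρ}

/-- Average of `f` over the parabolic cylinder `C_ρ(t,x)`. -/
def cylAvg (d : ℕ) (α ρ t : ℝ) (x : Spc d) (f : ℝ × Spc d → ℝ≥0∞) : ℝ≥0∞ :=
  (volume (cylP d α ρ t x))⁻¹ * ∫⁻ p in cylP d α ρ t x, f p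

/-- Parabolic Morrey norm `‖v‖_{E_q}`. -/
def morreyE (d : ℕ) (α q : ℝ) (v : ℝ × Spc d → ℝ≥0∞) : ℝ≥0∞ :=
  ⨆ (ρ : ℝ) (_ : 0 < ρ) (t : ℝ) (x : Spc d),
    ENNReal.ofReal ρ * (cylAvg d α ρ t x (fun p => v p ^ q)) ^ (1 / q)

/-- Elliptic Morrey norm `‖w‖_{M_q}` on `ℝ^d`. -/
def morreyM (d : ℕ) (q : ℝ) (w : Spc d → ℝ≥0∞) : ℝ≥0∞ :=
  ⨆ (ρ : ℝ) (_ : 0 < ρ) (x : Spc d),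
    ENNReal.ofReal ρ *
      ((volume (Metric.closedBall x ρ))⁻¹ *
        ∫⁻ y in Metric.closedBall x ρ, w y ^ q) ^ (1 / q)

/-- Fractional (parabolic) maximal function `M_β f(t,x)`. -/
def maxFun (d : ℕ) (α β : ℝ) (f : ℝ × Spc d → ℝ≥0∞) (t : ℝ) (x : Spc d) : ℝ≥0∞ :=
  ⨆ (ρ : ℝ) (_ : 0 < ρ), ENNReal.ofReal (ρ ^ β) * cylAvg d α ρ t x f

/-- Uncentered parabolic maximal function `M̂ f(z)`, sup over all parabolic
cylinders containing `z`. -/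
def hatM (d : ℕ) (α : ℝ) (f : ℝ × Spc d → ℝ≥0∞) (z : ℝ × Spc d) : ℝ≥0∞ :=
  ⨆ (ρ : ℝ) (_ : 0 < ρ) (t : ℝ) (x : Spc d) (_ : z ∈ cylP d α ρ t x),
    cylAvg d α ρ t x f

/-- The kernel `p_γ(s,y) = 1_{s>0} s^{γ/2} min(|y|^{-d-α}, s^{-(d+α)/α})`. -/
def pKer (d : ℕ) (α γ : ℝ) (s : ℝ) (y : Spc d) : ℝ≥0∞ :=
  if 0 < s then
    (if s ^ (1 / α) ≤ ‖y‖ then ENNReal.ofReal (s ^ (γ / 2) * ‖y‖ ^ (-(d : ℝ) - α))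
     else ENNReal.ofReal (s ^ (γ / 2 - ((d : ℝ) + α) / α)))
  else 0

/-- `P_γ f(t,x) = ∫ p_γ(s,y) f(t+s, x+y) dy ds`. -/
def Pop (d : ℕ) (α γ : ℝ) (f : ℝ × Spc d → ℝ≥0∞) (t : ℝ) (x : Spc d) : ℝ≥0∞ :=
  ∫⁻ p : ℝ × Spc d, pKer d α γ p.1 p.2 * f (t + p.1, x + p.2)

/-- `P*_γ f(t,x) = ∫ p_γ(s,y) f(t-s, x+y) dy ds`. -/
def PopStar (d : ℕ) (α γ : ℝ) (f : ℝ × Spc d → ℝ≥0∞) (t : ℝ) (x : Spc d) : ℝ≥0∞ :=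
  ∫⁻ p : ℝ × Spc d, pKer d α γ p.1 p.2 * f (t - p.1, x + p.2)

/-!
With `r = max ‖y‖ s^(1/α)` the parabolic distance of `(s, y)` from the origin, the kernel is
bounded by `r^(αγ/2 - d - α) = κ ∫_r^∞ ρ^(αγ/2 - d - α - 1) dρ`, `κ = d + α - αγ/2`, and
`ρ ≥ r` says exactly that `(s, y) ∈ C_ρ(0,0)`. Exchanging the order of integration and using
`|C_ρ| = ρ^(d+α) |B_1|` gives `P_γ f(t,x) ≤ κ |B_1| ∫_0^∞ ρ^(αγ/2 - 1) A(ρ) dρ` with `A(ρ)` the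
average of `f` over `C_ρ(t,x)`. Now `A(ρ) ≤ M f` and `A(ρ) ≤ ρ^(-β) M_β f`; use the first bound
for `ρ ≤ R` and the second for `ρ > R`, where `R = (M_β f / M f)^(1/β)` balances the two pieces.
-/

open Metric

section Cylinders

variable {d : ℕ}

lemma cylP_eq_prod (α ρ t : ℝ) (x : Spc d) :
    cylP d α ρ t x = Icc t (t + ρ ^ α) ×ˢ closedBall x ρ := by
  ext p
  simp only [cylP, mem_ofPred_eq, mem_prod, mem_Icc, mem_closedBall]
  tauto

lemma measurableSet_cylP (α ρ t : ℝ) (x : Spc d) : MeasurableSet (cylP d α ρ t x) := by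
  rw [cylP_eq_prod]
  exact measurableSet_Icc.prod measurableSet_closedBall

lemma volume_cylP (α : ℝ) {ρ : ℝ} (hρ : 0 ≤ ρ) (t : ℝ) (x : Spc d) :
    volume (cylP d α ρ t x) =
      ENNReal.ofReal (ρ ^ α) * ENNReal.ofReal (ρ ^ (d : ℝ)) * volume (ball (0 : Spc d) 1) := by
  rw [cylP_eq_prod, Measure.volume_eq_prod, Measure.prod_prod, Real.volume_Icc,
    add_sub_cancel_left, Measure.addHaar_closedBall _ x hρ, finrank_euclideanSpace_fin,
    ← Real.rpow_natCast ρ d, mul_assoc]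

lemma volume_cylP_ne_zero (α : ℝ) {ρ : ℝ} (hρ : 0 < ρ) (t : ℝ) (x : Spc d) :
    volume (cylP d α ρ t x) ≠ 0 := by
  rw [volume_cylP α hρ.le]
  exact mul_ne_zero (mul_ne_zero (by simpa using by positivity) (by simpa using by positivity))
    (measure_ball_pos _ _ one_pos).ne'

lemma volume_cylP_ne_top (α : ℝ) {ρ : ℝ} (hρ : 0 ≤ ρ) (t : ℝ) (x : Spc d) :
    volume (cylP d α ρ t x) ≠ ⊤ := by
  rw [volume_cylP α hρ]
  exact ENNReal.mul_ne_top (ENNReal.mul_ne_top ofReal_ne_top ofReal_ne_top)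
    measure_ball_lt_top.ne

lemma setLIntegral_cylP (α : ℝ) {ρ : ℝ} (hρ : 0 < ρ) (t : ℝ) (x : Spc d)
    (F : ℝ × Spc d → ℝ≥0∞) :
    ∫⁻ q in cylP d α ρ t x, F q = volume (cylP d α ρ t x) * cylAvg d α ρ t x F := by
  rw [cylAvg, ← mul_assoc, ENNReal.mul_inv_cancel (volume_cylP_ne_zero α hρ t x)
    (volume_cylP_ne_top α hρ.le t x), one_mul]

lemma preimage_add_cylP (α ρ t : ℝ) (x : Spc d) :
    (fun p : ℝ × Spc d => (t + p.1, x + p.2)) ⁻¹' cylP d α ρ t x = cylP d α ρ 0 0 := by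
  ext p
  simp only [mem_preimage, cylP, mem_ofPred_eq, dist_eq_norm, add_sub_cancel_left, sub_zero,
    zero_add]
  constructor <;> rintro ⟨h₁, h₂, h₃⟩ <;> exact ⟨by linarith, by linarith, h₃⟩

lemma setLIntegral_cylP_zero_add (α ρ t : ℝ) (x : Spc d) (F : ℝ × Spc d → ℝ≥0∞) :
    ∫⁻ p in cylP d α ρ 0 0, F (t + p.1, x + p.2) = ∫⁻ q in cylP d α ρ t x, F q := by
  have hmp : MeasurePreserving (fun p : ℝ × Spc d => (t + p.1, x + p.2)) := by
    rw [Measure.volume_eq_prod]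
    exact (measurePreserving_add_left volume t).prod (measurePreserving_add_left volume x)
  rw [← preimage_add_cylP]
  exact hmp.setLIntegral_comp_preimage_emb
    ((Homeomorph.addLeft t).prodCongr (Homeomorph.addLeft x)).measurableEmbedding F _

lemma measurableSet_setOf_mem_cylP_zero (α : ℝ) :
    MeasurableSet {q : (ℝ × Spc d) × ℝ | q.1 ∈ cylP d α q.2 0 0} := by
  simp only [cylP, zero_add, dist_zero_right, ofPred_and]
  exact (measurableSet_le (by fun_prop) (by fun_prop)).inter
    ((measurableSet_le (by fun_prop) (by fun_prop)).inter
      (measurableSet_le (by fun_prop) (by fun_prop)))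

lemma setOf_mem_cylP_zero_eq_Ici {α s : ℝ} (hα : 0 < α) (hs : 0 < s) (y : Spc d) :
    {ρ | (s, y) ∈ cylP d α ρ 0 0} = Ici (max ‖y‖ (s ^ (1 / α))) := by
  ext ρ
  simp only [cylP, mem_ofPred_eq, mem_Ici, max_le_iff, zero_add, dist_zero_right, one_div]
  constructor
  · rintro ⟨-, hsρ, hyρ⟩
    exact ⟨hyρ, (Real.rpow_inv_le_iff_of_pos hs.le ((norm_nonneg y).trans hyρ) hα).2 hsρ⟩
  · rintro ⟨hyρ, hsρ⟩
    exact ⟨hs.le, (Real.rpow_inv_le_iff_of_pos hs.le ((norm_nonneg y).trans hyρ) hα).1 hsρ, hyρ⟩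

end Cylinders

lemma lintegral_Ioi_rpow {r e : ℝ} (hr : 0 < r) (he : e < -1) :
    ∫⁻ ρ in Ioi r, ENNReal.ofReal (ρ ^ e) = ENNReal.ofReal (r ^ (e + 1) / (-(e + 1))) := by
  rw [← ofReal_integral_eq_lintegral_ofReal (integrableOn_Ioi_rpow_of_lt he hr),
    integral_Ioi_rpow_of_lt he hr, neg_div, div_neg]
  filter_upwards [self_mem_ae_restrict measurableSet_Ioi] with ρ hρ
  exact Real.rpow_nonneg (hr.trans hρ).le e

lemma lintegral_Ioc_rpow {R e : ℝ} (hR : 0 < R) (he : -1 < e) :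
    ∫⁻ ρ in Ioc 0 R, ENNReal.ofReal (ρ ^ e) = ENNReal.ofReal (R ^ (e + 1) / (e + 1)) := by
  rw [← ofReal_integral_eq_lintegral_ofReal
      ((intervalIntegrable_iff_integrableOn_Ioc_of_le hR.le).mp
        (intervalIntegral.intervalIntegrable_rpow' he)),
    ← intervalIntegral.integral_of_le hR.le, integral_rpow (Or.inl he),
    Real.zero_rpow (by linarith), sub_zero]
  filter_upwards [self_mem_ae_restrict measurableSet_Ioc] with ρ hρ
  exact Real.rpow_nonneg hρ.1.le e

section Kernel

variable {d : ℕ} {α γ : ℝ}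

lemma pKer_le_rpow_max (hα : 0 < α) (hγ : 0 ≤ γ) {s : ℝ} (hs : 0 < s) (y : Spc d) :
    pKer d α γ s y ≤ ENNReal.ofReal (max ‖y‖ (s ^ (1 / α)) ^ (α * γ / 2 - d - α)) := by
  set r := max ‖y‖ (s ^ (1 / α))
  have hsr : s ^ (1 / α) ≤ r := le_max_right _ _
  have hr : 0 < r := (Real.rpow_pos_of_pos hs _).trans_le hsr
  have hs_pow : s ^ (γ / 2) ≤ r ^ (α * γ / 2) := by
    calc s ^ (γ / 2) = (s ^ (1 / α)) ^ (α * γ / 2) := by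
          rw [← Real.rpow_mul hs.le]; congr 1; field_simp
      _ ≤ r ^ (α * γ / 2) := by gcongr
  have hmain : s ^ (γ / 2) * r ^ (-(d : ℝ) - α) ≤ r ^ (α * γ / 2 - d - α) := by
    calc s ^ (γ / 2) * r ^ (-(d : ℝ) - α) ≤ r ^ (α * γ / 2) * r ^ (-(d : ℝ) - α) := by gcongr
      _ = r ^ (α * γ / 2 - d - α) := by rw [← Real.rpow_add hr]; ring_nf
  rw [pKer, if_pos hs]
  split_ifs with hy
  · rw [show r = ‖y‖ from max_eq_left hy] at hmain ⊢
    exact ENNReal.ofReal_le_ofReal hmain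
  · have hr_eq : r = s ^ (1 / α) := max_eq_right (le_of_not_ge hy)
    refine ENNReal.ofReal_le_ofReal (le_of_eq_of_le ?_ hmain)
    rw [hr_eq, ← Real.rpow_mul hs.le, ← Real.rpow_add hs]
    congr 1
    field_simp
    ring

lemma pKer_le_lintegral_indicator_cylP (hα : 0 < α) (hγ : 0 ≤ γ)
    (hκ : α * γ / 2 < d + α) (p : ℝ × Spc d) :
    pKer d α γ p.1 p.2 ≤ ENNReal.ofReal (d + α - α * γ / 2) *
      ∫⁻ ρ in Ioi 0, (cylP d α ρ 0 0).indicator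
        (fun _ => ENNReal.ofReal (ρ ^ (α * γ / 2 - 1 - α - d))) p := by
  obtain ⟨s, y⟩ := p
  rcases le_or_gt s 0 with hs | hs
  · simp [pKer, not_lt.2 hs]
  set r := max ‖y‖ (s ^ (1 / α))
  have hr : 0 < r := (Real.rpow_pos_of_pos hs _).trans_le (le_max_right _ _)
  have hind : ∀ ρ, (cylP d α ρ 0 0).indicator
      (fun _ => ENNReal.ofReal (ρ ^ (α * γ / 2 - 1 - α - d))) (s, y) =
      (Ici r).indicator (fun ρ => ENNReal.ofReal (ρ ^ (α * γ / 2 - 1 - α - d))) ρ := by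
    intro ρ
    rw [← setOf_mem_cylP_zero_eq_Ici hα hs y]
    rfl
  have hlayer : ∫⁻ ρ in Ioi 0, (Ici r).indicator
      (fun ρ => ENNReal.ofReal (ρ ^ (α * γ / 2 - 1 - α - d))) ρ =
      ENNReal.ofReal (r ^ (α * γ / 2 - d - α) / (d + α - α * γ / 2)) := by
    rw [lintegral_indicator measurableSet_Ici, Measure.restrict_restrict measurableSet_Ici,
      inter_eq_left.2 (Ici_subset_Ioi.2 hr), Measure.restrict_congr_set Ioi_ae_eq_Ici.symm,
      lintegral_Ioi_rpow hr (by linarith),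
      show α * γ / 2 - 1 - α - d + 1 = α * γ / 2 - d - α by ring]
    congr 2
    ring
  simp only [hind, hlayer]
  rw [← ENNReal.ofReal_mul (by linarith), mul_div_cancel₀ _ (by linarith)]
  exact pKer_le_rpow_max hα hγ hs y

end Kernel

section Potential

variable {d : ℕ} {α γ : ℝ}

lemma lintegral_indicator_cylP_zero_mul {ρ : ℝ} (hρ : 0 < ρ) (e : ℝ) (F : ℝ × Spc d → ℝ≥0∞)
    (t : ℝ) (x : Spc d) :
    ∫⁻ p, (cylP d α ρ 0 0).indicator (fun _ => ENNReal.ofReal (ρ ^ (e - α - d))) p *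
        F (t + p.1, x + p.2) =
      volume (ball (0 : Spc d) 1) * (ENNReal.ofReal (ρ ^ e) * cylAvg d α ρ t x F) := by
  have hpow : ρ ^ (e - α - d) * (ρ ^ α * ρ ^ (d : ℝ)) = ρ ^ e := by
    rw [← Real.rpow_add hρ, ← Real.rpow_add hρ]
    ring_nf
  rw [lintegral_congr fun p => (indicator_mul_left (cylP d α ρ 0 0)
      (fun _ => ENNReal.ofReal (ρ ^ (e - α - d))) fun p => F (t + p.1, x + p.2)).symm,
    lintegral_indicator (measurableSet_cylP α ρ 0 0), lintegral_const_mul' _ _ ofReal_ne_top,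
    setLIntegral_cylP_zero_add, setLIntegral_cylP α hρ, volume_cylP α hρ.le,
    ← hpow, ENNReal.ofReal_mul (by positivity), ENNReal.ofReal_mul (by positivity)]
  ring

lemma Pop_le_lintegral_cylAvg (hα : 0 < α) (hγ : 0 ≤ γ) (hκ : α * γ / 2 < d + α)
    {F : ℝ × Spc d → ℝ≥0∞} (hF : Measurable F) (t : ℝ) (x : Spc d) :
    Pop d α γ F t x ≤ ENNReal.ofReal (d + α - α * γ / 2) * volume (ball (0 : Spc d) 1) *
      ∫⁻ ρ in Ioi 0, ENNReal.ofReal (ρ ^ (α * γ / 2 - 1)) * cylAvg d α ρ t x F := by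
  set ind : ℝ × Spc d → ℝ → ℝ≥0∞ := fun p ρ =>
    (cylP d α ρ 0 0).indicator (fun _ => ENNReal.ofReal (ρ ^ (α * γ / 2 - 1 - α - d))) p
  have hind : Measurable (Function.uncurry ind) :=
    Measurable.indicator (f := fun q : (ℝ × Spc d) × ℝ =>
      ENNReal.ofReal (q.2 ^ (α * γ / 2 - 1 - α - d))) (by fun_prop)
      (measurableSet_setOf_mem_cylP_zero α)
  have hswap : Measurable (Function.uncurry fun p ρ => ind p ρ * F (t + p.1, x + p.2)) :=
    hind.mul (hF.comp (by fun_prop))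
  calc Pop d α γ F t x
      ≤ ∫⁻ p, (ENNReal.ofReal (d + α - α * γ / 2) * ∫⁻ ρ in Ioi 0, ind p ρ) *
          F (t + p.1, x + p.2) :=
        lintegral_mono fun p => mul_le_mul_left (pKer_le_lintegral_indicator_cylP hα hγ hκ p) _
    _ = ENNReal.ofReal (d + α - α * γ / 2) *
          ∫⁻ ρ in Ioi 0, ∫⁻ p, ind p ρ * F (t + p.1, x + p.2) := by
        simp_rw [mul_assoc, ← lintegral_mul_const _ hind.of_uncurry_left]
        rw [lintegral_const_mul' _ _ ofReal_ne_top, lintegral_lintegral_swap hswap.aemeasurable]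
    _ = _ := by
        rw [setLIntegral_congr_fun measurableSet_Ioi
            fun ρ hρ => lintegral_indicator_cylP_zero_mul hρ _ F t x,
          lintegral_const_mul' _ _ measure_ball_lt_top.ne, mul_assoc]

end Potential

section Interpolation

variable {a β : ℝ} {g : ℝ → ℝ≥0∞} {M N : ℝ≥0∞}

lemma lintegral_Ioi_rpow_mul_le_of_split (ha : 0 < a) (haβ : a < β) {R : ℝ} (hR : 0 < R)
    (hM : ∀ ρ, 0 < ρ → g ρ ≤ M) (hN : ∀ ρ, 0 < ρ → ENNReal.ofReal (ρ ^ β) * g ρ ≤ N) :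
    ∫⁻ ρ in Ioi 0, ENNReal.ofReal (ρ ^ (a - 1)) * g ρ ≤
      ENNReal.ofReal (R ^ a / a) * M + ENNReal.ofReal (R ^ (a - β) / (β - a)) * N := by
  rw [← Ioc_union_Ioi_eq_Ioi hR.le, lintegral_union measurableSet_Ioi (Ioc_disjoint_Ioi le_rfl)]
  gcongr ?_ + ?_
  · calc ∫⁻ ρ in Ioc 0 R, ENNReal.ofReal (ρ ^ (a - 1)) * g ρ
        ≤ ∫⁻ ρ in Ioc 0 R, ENNReal.ofReal (ρ ^ (a - 1)) * M :=
          setLIntegral_mono (by fun_prop) fun ρ hρ => mul_le_mul_right (hM ρ hρ.1) _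
      _ = ENNReal.ofReal (R ^ a / a) * M := by
          rw [lintegral_mul_const _ (by fun_prop), lintegral_Ioc_rpow hR (by linarith),
            sub_add_cancel]
  · calc ∫⁻ ρ in Ioi R, ENNReal.ofReal (ρ ^ (a - 1)) * g ρ
        ≤ ∫⁻ ρ in Ioi R, ENNReal.ofReal (ρ ^ (a - 1 - β)) * N := by
          refine setLIntegral_mono (by fun_prop) fun ρ hρ => ?_
          have hρ0 : 0 < ρ := hR.trans hρ
          calc ENNReal.ofReal (ρ ^ (a - 1)) * g ρ
              = ENNReal.ofReal (ρ ^ (a - 1 - β)) * (ENNReal.ofReal (ρ ^ β) * g ρ) := by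
                rw [← mul_assoc, ← ENNReal.ofReal_mul (by positivity), ← Real.rpow_add hρ0,
                  sub_add_cancel]
            _ ≤ ENNReal.ofReal (ρ ^ (a - 1 - β)) * N := mul_le_mul_right (hN ρ hρ0) _
      _ = ENNReal.ofReal (R ^ (a - β) / (β - a)) * N := by
          rw [lintegral_mul_const _ (by fun_prop), lintegral_Ioi_rpow hR (by linarith),
            show a - 1 - β + 1 = a - β by ring, neg_sub]

lemma lintegral_Ioi_rpow_mul_eq_zero (hM : ∀ ρ, 0 < ρ → g ρ ≤ M)
    (hN : ∀ ρ, 0 < ρ → ENNReal.ofReal (ρ ^ β) * g ρ ≤ N) (hzero : M = 0 ∨ N = 0) :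
    ∫⁻ ρ in Ioi 0, ENNReal.ofReal (ρ ^ (a - 1)) * g ρ = 0 := by
  have hg : ∀ ρ ∈ Ioi (0 : ℝ), ENNReal.ofReal (ρ ^ (a - 1)) * g ρ = 0 := fun ρ hρ => by
    refine mul_eq_zero_of_right _ ?_
    rcases hzero with h | h
    · exact nonpos_iff_eq_zero.1 (h ▸ hM ρ hρ)
    · have hρβ : ENNReal.ofReal (ρ ^ β) ≠ 0 := by
        simpa using Real.rpow_pos_of_pos (mem_Ioi.1 hρ) β
      exact (mul_eq_zero.1 (nonpos_iff_eq_zero.1 (h ▸ hN ρ hρ))).resolve_left hρβ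
  rw [setLIntegral_congr_fun measurableSet_Ioi hg, lintegral_zero]

lemma lintegral_Ioi_rpow_mul_le_interp (ha : 0 < a) (haβ : a < β)
    (hM : ∀ ρ, 0 < ρ → g ρ ≤ M) (hN : ∀ ρ, 0 < ρ → ENNReal.ofReal (ρ ^ β) * g ρ ≤ N) :
    ∫⁻ ρ in Ioi 0, ENNReal.ofReal (ρ ^ (a - 1)) * g ρ ≤
      ENNReal.ofReal (1 / a + 1 / (β - a)) * N ^ (a / β) * M ^ (1 - a / β) := by
  have hβ : 0 < β := ha.trans haβ
  have hθ : 0 < a / β := div_pos ha hβ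
  have hθ' : 0 < 1 - a / β := sub_pos.2 ((div_lt_one hβ).2 haβ)
  by_cases hzero : M = 0 ∨ N = 0
  · exact (lintegral_Ioi_rpow_mul_eq_zero hM hN hzero).trans_le zero_le
  obtain ⟨hM0, hN0⟩ := not_or.1 hzero
  have hNθ : N ^ (a / β) ≠ 0 := (ENNReal.rpow_eq_zero_iff_of_pos hθ).not.2 hN0
  have hMθ : M ^ (1 - a / β) ≠ 0 := (ENNReal.rpow_eq_zero_iff_of_pos hθ').not.2 hM0
  have hC : ENNReal.ofReal (1 / a + 1 / (β - a)) ≠ 0 := by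
    have := sub_pos.2 haβ
    simpa using by positivity
  by_cases hMtop : M = ⊤
  · rw [hMtop, ENNReal.top_rpow_of_pos hθ', ENNReal.mul_top (mul_ne_zero hC hNθ)]
    exact le_top
  by_cases hNtop : N = ⊤
  · rw [hNtop, ENNReal.top_rpow_of_pos hθ, ENNReal.mul_top hC, ENNReal.top_mul hMθ]
    exact le_top
  obtain ⟨m, hm, rfl⟩ : ∃ m, 0 < m ∧ M = ENNReal.ofReal m :=
    ⟨M.toReal, ENNReal.toReal_pos hM0 hMtop, (ENNReal.ofReal_toReal hMtop).symm⟩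
  obtain ⟨n, hn, rfl⟩ : ∃ n, 0 < n ∧ N = ENNReal.ofReal n :=
    ⟨N.toReal, ENNReal.toReal_pos hN0 hNtop, (ENNReal.ofReal_toReal hNtop).symm⟩
  set R := (n / m) ^ (1 / β)
  have hR : 0 < R := by positivity
  have hRm : R ^ a * m = n ^ (a / β) * m ^ (1 - a / β) := by
    rw [← Real.rpow_mul (by positivity), one_div_mul_eq_div, Real.div_rpow hn.le hm.le,
      Real.rpow_sub hm, Real.rpow_one]
    field_simp
  have hRn : R ^ (a - β) * n = R ^ a * m := by
    have hRβ : R ^ β = n / m := by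
      rw [← Real.rpow_mul (by positivity), one_div_mul_cancel hβ.ne', Real.rpow_one]
    rw [Real.rpow_sub hR, hRβ]
    field_simp
  refine (lintegral_Ioi_rpow_mul_le_of_split ha haβ hR hM hN).trans_eq ?_
  rw [ENNReal.ofReal_rpow_of_pos hn, ENNReal.ofReal_rpow_of_pos hm,
    ← ENNReal.ofReal_mul (by positivity), ← ENNReal.ofReal_mul (by positivity),
    ← ENNReal.ofReal_mul (by positivity), ← ENNReal.ofReal_mul (by positivity),
    ← ENNReal.ofReal_add (by positivity) (by positivity)]
  congr 1
  rw [div_mul_eq_mul_div, div_mul_eq_mul_div, hRn, hRm]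
  ring

end Interpolation

lemma ofReal_rpow_mul_cylAvg_le_maxFun {d : ℕ} (α β : ℝ) (F : ℝ × Spc d → ℝ≥0∞) (t : ℝ)
    (x : Spc d) {ρ : ℝ} (hρ : 0 < ρ) :
    ENNReal.ofReal (ρ ^ β) * cylAvg d α ρ t x F ≤ maxFun d α β F t x :=
  le_iSup₂ (f := fun ρ (_ : 0 < ρ) => ENNReal.ofReal (ρ ^ β) * cylAvg d α ρ t x F) ρ hρ

lemma cylAvg_le_maxFun_zero {d : ℕ} (α : ℝ) (F : ℝ × Spc d → ℝ≥0∞) (t : ℝ) (x : Spc d)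
    {ρ : ℝ} (hρ : 0 < ρ) : cylAvg d α ρ t x F ≤ maxFun d α 0 F t x := by
  simpa using ofReal_rpow_mul_cylAvg_le_maxFun α 0 F t x hρ

theorem stmt_3_general (d : ℕ) (hd : 2 ≤ d) (α γ β : ℝ) (hα1 : 1 < α)
    (hγ1 : 0 < γ) (hγ2 : γ ≤ 2) (hβ1 : α * γ / 2 < β) :
    ∃ C : ℝ, 0 < C ∧
      ∀ (f : ℝ × Spc d → ℝ), Continuous f → HasCompactSupport f → (∀ z, 0 ≤ f z) →
      ∀ (t : ℝ) (x : Spc d),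
      Pop d α γ (fun z => ENNReal.ofReal (f z)) t x ≤
        ENNReal.ofReal C *
          (maxFun d α β (fun z => ENNReal.ofReal (f z)) t x) ^ (α * γ / 2 * (1 / β)) *
          (maxFun d α 0 (fun z => ENNReal.ofReal (f z)) t x) ^ (1 - α * γ / 2 * (1 / β)) := by
  have hα : 0 < α := by linarith
  have ha : 0 < α * γ / 2 := by positivity
  have hκ : α * γ / 2 < d + α := by
    have : (2 : ℝ) ≤ d := by exact_mod_cast hd
    nlinarith
  have hβa : 0 < β - α * γ / 2 := sub_pos.2 hβ1
  set ω := volume (ball (0 : Spc d) 1)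
  have hω : 0 < ω.toReal :=
    ENNReal.toReal_pos (measure_ball_pos _ _ one_pos).ne' measure_ball_lt_top.ne
  refine ⟨(d + α - α * γ / 2) * ω.toReal * (1 / (α * γ / 2) + 1 / (β - α * γ / 2)),
    mul_pos (mul_pos (by linarith) hω) (by positivity), fun f hf _ _ t x => ?_⟩
  set F : ℝ × Spc d → ℝ≥0∞ := fun z => ENNReal.ofReal (f z)
  have hF : Measurable F := ENNReal.measurable_ofReal.comp hf.measurable
  calc Pop d α γ F t x
      ≤ ENNReal.ofReal (d + α - α * γ / 2) * ω *
          ∫⁻ ρ in Ioi 0, ENNReal.ofReal (ρ ^ (α * γ / 2 - 1)) * cylAvg d α ρ t x F :=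
        Pop_le_lintegral_cylAvg hα hγ1.le hκ hF t x
    _ ≤ ENNReal.ofReal (d + α - α * γ / 2) * ω *
          (ENNReal.ofReal (1 / (α * γ / 2) + 1 / (β - α * γ / 2)) *
            maxFun d α β F t x ^ (α * γ / 2 / β) * maxFun d α 0 F t x ^ (1 - α * γ / 2 / β)) := by
        gcongr
        exact lintegral_Ioi_rpow_mul_le_interp ha hβ1 (fun ρ => cylAvg_le_maxFun_zero α F t x)
          (fun ρ => ofReal_rpow_mul_cylAvg_le_maxFun α β F t x)
    _ = _ := by
        rw [mul_one_div, ENNReal.ofReal_mul (by positivity), ENNReal.ofReal_mul (by linarith),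
          ENNReal.ofReal_toReal measure_ball_lt_top.ne]
        ring

/-- interpolation bound
`P_γ f ≤ C (M_β f)^{(αγ/2)/β} (M f)^{1 - (αγ/2)/β}`, in `[0,∞]`. -/
theorem stmt_3 (d : ℕ) (hd : 2 ≤ d) (α γ β : ℝ) (hα1 : 1 < α) (hα2 : α < 2)
    (hγ1 : 0 < γ) (hγ2 : γ ≤ 2) (hβ1 : α * γ / 2 < β) (hβ2 : β ≤ d + γ) :
    ∃ C : ℝ, 0 < C ∧
      ∀ (f : ℝ × Spc d → ℝ), Continuous f → HasCompactSupport f → (∀ z, 0 ≤ f z) →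
      ∀ (t : ℝ) (x : Spc d),
      Pop d α γ (fun z => ENNReal.ofReal (f z)) t x ≤
        ENNReal.ofReal C *
          (maxFun d α β (fun z => ENNReal.ofReal (f z)) t x) ^ (α * γ / 2 * (1 / β)) *
          (maxFun d α 0 (fun z => ENNReal.ofReal (f z)) t x) ^ (1 - α * γ / 2 * (1 / β)) :=
  stmt_3_general d hd α γ β hα1 hγ1 hγ2 hβ1
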